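/- Let F be a field and α, β ∈ F^× such that β = x² − α y² for some x, y ∈ F, not both zero. Then there exist γ₁, δ₁, γ₂, δ₂ ∈ F^× such that in K₂F: {α, β} ≡ 2({γ₁, δ₁} + {γ₂, δ₂}) modulo 4K₂F. -/

import Mathlib

open TensorProduct

/-- The Steinberg submodule of `Fˣ ⊗ Fˣ`: spanned by `a ⊗ (1 - a)` for `a ≠ 1`. -/
def steinberg (F : Type*) [Field F] :
    Submodule ℤ (Additive Fˣ ⊗[ℤ] Additive Fˣ) :=
  Submodule.span ℤ
    { z | ∃ (a : Fˣ) (h : (a : F) ≠ 1),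
        z = Additive.ofMul a ⊗ₜ[ℤ]
            Additive.ofMul (Units.mk0 (1 - (a : F)) (sub_ne_zero.mpr h.symm)) }

/-- The Milnor K-group `K₂ F`. -/
def K2 (F : Type*) [Field F] :=
  (Additive Fˣ ⊗[ℤ] Additive Fˣ) ⧸ steinberg F

noncomputable instance (F : Type*) [Field F] : AddCommGroup (K2 F) :=
  inferInstanceAs (AddCommGroup ((Additive Fˣ ⊗[ℤ] Additive Fˣ) ⧸ steinberg F))

/-- The symbol `{a, b}` in `K₂ F`. -/
noncomputable def symbol {F : Type*} [Field F] (a b : Fˣ) : K2 F :=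
  Submodule.Quotient.mk (Additive.ofMul a ⊗ₜ[ℤ] Additive.ofMul b)

/-!
Write `c = x / y` and `u = β / y² = c² − α`. The Steinberg relation for `c² / α`, whose complement
`1 − c² / α` is `−u / α`, gives `{c², −u / α} = {α, −u / α} = {α, u}`, since `{α, −α} = 0`.
Hence `{α, β} = {α, u} + 2 {α, y} = 2 ({c, −u / α} + {α, y})`, so the multiple of `4 K₂F` can be
taken to be zero. The degenerate cases `y = 0` and `x = 0` give `β = x²` and `β = −α y²`.
-/

namespace K2

variable {F : Type*} [Field F]

lemma symbol_mul_left (a b c : Fˣ) : symbol (a * b) c = symbol a c + symbol b c := by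
  rw [symbol, ofMul_mul, TensorProduct.add_tmul]
  exact Submodule.Quotient.mk_add _

lemma symbol_mul_right (a b c : Fˣ) : symbol a (b * c) = symbol a b + symbol a c := by
  rw [symbol, ofMul_mul, TensorProduct.tmul_add]
  exact Submodule.Quotient.mk_add _

lemma symbol_one_left (b : Fˣ) : symbol (1 : Fˣ) b = 0 := by
  rw [symbol, ofMul_one, TensorProduct.zero_tmul]
  exact Submodule.Quotient.mk_zero _

lemma symbol_one_right (a : Fˣ) : symbol a (1 : Fˣ) = 0 := by
  rw [symbol, ofMul_one, TensorProduct.tmul_zero]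
  exact Submodule.Quotient.mk_zero _

lemma symbol_inv_left (a b : Fˣ) : symbol a⁻¹ b = -symbol a b :=
  eq_neg_of_add_eq_zero_left <| by rw [← symbol_mul_left, inv_mul_cancel, symbol_one_left]

lemma symbol_inv_right (a b : Fˣ) : symbol a b⁻¹ = -symbol a b :=
  eq_neg_of_add_eq_zero_left <| by rw [← symbol_mul_right, inv_mul_cancel, symbol_one_right]

lemma symbol_div_left (a b c : Fˣ) : symbol (a / b) c = symbol a c - symbol b c := by
  rw [div_eq_mul_inv, symbol_mul_left, symbol_inv_left, sub_eq_add_neg]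

lemma symbol_div_right (a b c : Fˣ) : symbol a (b / c) = symbol a b - symbol a c := by
  rw [div_eq_mul_inv, symbol_mul_right, symbol_inv_right, sub_eq_add_neg]

lemma symbol_pow_left (a b : Fˣ) (n : ℕ) : symbol (a ^ n) b = n • symbol a b := by
  induction n with
  | zero => rw [pow_zero, symbol_one_left, zero_smul]
  | succ n ih => rw [pow_succ, symbol_mul_left, ih, succ_nsmul]

lemma symbol_pow_right (a b : Fˣ) (n : ℕ) : symbol a (b ^ n) = n • symbol a b := by
  induction n with
  | zero => rw [pow_zero, symbol_one_right, zero_smul]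
  | succ n ih => rw [pow_succ, symbol_mul_right, ih, succ_nsmul]

lemma symbol_eq_zero_of_add_eq_one {a b : Fˣ} (h : (a : F) + b = 1) : symbol a b = 0 := by
  have ha : (a : F) ≠ 1 := fun ha ↦ b.ne_zero (by linear_combination h - ha)
  refine (Submodule.Quotient.mk_eq_zero _).2 (Submodule.subset_span ⟨a, ha, ?_⟩)
  obtain rfl : b = Units.mk0 (1 - (a : F)) (sub_ne_zero.2 ha.symm) :=
    Units.ext (eq_sub_of_add_eq' h)
  rfl

lemma symbol_self_neg (a : Fˣ) : symbol a (-a) = 0 := by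
  rcases eq_or_ne (a : F) 1 with ha | ha
  · rw [Units.val_eq_one.1 ha, symbol_one_left]
  have ha' : (a⁻¹ : Fˣ).val ≠ 1 := by simpa using ha
  let b := Units.mk0 (1 - (a : F)) (sub_ne_zero.2 ha.symm)
  let b' := Units.mk0 (1 - ((a⁻¹ : Fˣ) : F)) (sub_ne_zero.2 ha'.symm)
  have hneg : -a = b / b' := Units.ext <| by
    have h0 : (a : F) ≠ 0 := a.ne_zero
    have h1 : (a : F) - 1 ≠ 0 := sub_ne_zero.2 ha
    simp only [b, b', Units.val_neg, Units.val_div_eq_div_val, Units.val_mk0,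
      Units.val_inv_eq_inv_val]
    field_simp
    ring
  have hb : symbol a b = 0 := symbol_eq_zero_of_add_eq_one (by simp [b])
  have hb' : symbol a b' = 0 := by
    rw [← neg_eq_zero, ← symbol_inv_left]
    exact symbol_eq_zero_of_add_eq_one (by simp [b'])
  rw [hneg, symbol_div_right, hb, hb', sub_zero]

lemma symbol_eq_two_smul_of_eq_sq_sub {α u c : Fˣ} (hu : (u : F) = c ^ 2 - α) :
    symbol α u = 2 • symbol c (-u / α) := by
  have hsum : ((c ^ 2 / α : Fˣ) : F) + (-u / α : Fˣ) = 1 := by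
    have h0 : (α : F) ≠ 0 := α.ne_zero
    push_cast
    rw [hu]
    field_simp
    ring
  have hsteinberg := symbol_eq_zero_of_add_eq_one hsum
  have hα : symbol α (-u / α) = symbol α u := by
    rw [neg_div, ← div_neg, symbol_div_right, symbol_self_neg, sub_zero]
  rw [symbol_div_left, symbol_pow_left, hα, sub_eq_zero] at hsteinberg
  exact hsteinberg.symm

lemma exists_symbol_eq_two_smul_of_eq_sq_sub {α u : Fˣ} {c : F} (hu : (u : F) = c ^ 2 - α) :
    ∃ γ δ : Fˣ, symbol α u = 2 • symbol γ δ := by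
  rcases eq_or_ne c 0 with rfl | hc
  · refine ⟨1, 1, ?_⟩
    rw [symbol_one_left, smul_zero, show u = -α from Units.ext (by simp [hu]), symbol_self_neg]
  · exact ⟨_, _, symbol_eq_two_smul_of_eq_sq_sub (c := Units.mk0 c hc) hu⟩

end K2

open K2 in
theorem symbol_length_two_mod_four_general (F : Type*) [Field F] (α β : Fˣ) (x y : F)
    (hβ : (β : F) = x ^ 2 - (α : F) * y ^ 2) :
    ∃ (γ₁ δ₁ γ₂ δ₂ : Fˣ) (τ : K2 F),
      symbol α β = 2 • (symbol γ₁ δ₁ + symbol γ₂ δ₂) + 4 • τ := by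
  rcases eq_or_ne y 0 with rfl | hy
  · have hx : x ≠ 0 := fun hx ↦ β.ne_zero (by simp [hβ, hx])
    refine ⟨α, Units.mk0 x hx, 1, 1, 0, ?_⟩
    rw [show β = Units.mk0 x hx ^ 2 from Units.ext (by simp [hβ]), symbol_pow_right,
      symbol_one_left, add_zero, smul_zero, add_zero]
  · let y' := Units.mk0 y hy
    obtain ⟨γ, δ, hγδ⟩ := exists_symbol_eq_two_smul_of_eq_sq_sub (α := α) (u := β / y' ^ 2)
      (c := x / y) (by
        simp only [y', Units.val_div_eq_div_val, Units.val_pow_eq_pow_val, Units.val_mk0, hβ]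
        field_simp)
    refine ⟨γ, δ, α, y', 0, ?_⟩
    rw [← div_mul_cancel β (y' ^ 2), symbol_mul_right, hγδ, symbol_pow_right, smul_zero, add_zero,
      smul_add]

/-- If `β = x² − α y² ≠ 0` with `x, y` not both zero, then there exist
`γ₁, δ₁, γ₂, δ₂ ∈ Fˣ` with `{α, β} ≡ 2({γ₁, δ₁} + {γ₂, δ₂})` modulo `4 K₂F`. -/
theorem symbol_length_two_mod_four (F : Type*) [Field F] (α β : Fˣ) (x y : F)
    (hxy : ¬ (x = 0 ∧ y = 0)) (hβ : (β : F) = x ^ 2 - (α : F) * y ^ 2) :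
    ∃ (γ₁ δ₁ γ₂ δ₂ : Fˣ) (τ : K2 F),
      symbol α β = 2 • (symbol γ₁ δ₁ + symbol γ₂ δ₂) + 4 • τ :=
  symbol_length_two_mod_four_general F α β x y hβ
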